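/- arXiv:2003.07001 — 2 statements merged into one kernel-verified Lean document; each statement's English description precedes it below -/
import Mathlib

section
/- Let δ be real with 0 < δ < 1/π. Then for purely imaginary distortion θ = iδ, the imaginary part of the difference of distorted points satisfies |Im(Φ_{iδ}(ξ) − Φ_{iδ}(η))| ≤ δ · min over k ∈ ℤ of |Re(Φ_{iδ}(ξ) − Φ_{iδ}(η)) − 2k| · π, for all real ξ, η. -/
/-! The real part of `Φ_{iδ}(ξ) − Φ_{iδ}(η)` is `ξ − η` and the imaginary part is
`δ (sin πξ − sin πη)`. Since `sin ∘ (π ·)` is `π`-Lipschitz and `2`-periodic,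
`|sin πξ − sin πη| ≤ π |ξ − η − 2k|` for every integer `k`. -/

open Real

theorem abs_sin_pi_mul_sub_sin_pi_mul_le (ξ η : ℝ) (k : ℤ) :
    |sin (π * ξ) - sin (π * η)| ≤ π * |ξ - η - 2 * k| := by
  have hperiodic : sin (π * ξ) = sin (π * (ξ - 2 * k)) := by
    rw [← sin_add_int_mul_two_pi (π * (ξ - 2 * k)) k]
    ring_nf
  calc |sin (π * ξ) - sin (π * η)|
      ≤ |π * (ξ - 2 * k) - π * η| := hperiodic ▸ abs_sin_sub_sin_le _ _
    _ = π * |ξ - η - 2 * k| := by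
      rw [← mul_sub, abs_mul, abs_of_pos pi_pos, sub_right_comm]

theorem abs_sin_pi_mul_sub_sin_pi_mul_le_iInf (ξ η : ℝ) :
    |sin (π * ξ) - sin (π * η)| ≤ (⨅ k : ℤ, |ξ - η - 2 * k|) * π := by
  rw [← div_le_iff₀ pi_pos]
  refine le_ciInf fun k => ?_
  rw [div_le_iff₀' pi_pos]
  exact abs_sin_pi_mul_sub_sin_pi_mul_le ξ η k

theorem Complex.re_ofReal_add_I_mul (x d s : ℝ) : ((x : ℂ) + I * d * s).re = x := by
  simp

theorem Complex.im_ofReal_add_I_mul (x d s : ℝ) : ((x : ℂ) + I * d * s).im = d * s := by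
  simp

theorem distorted_im_le_delta_dist_general (δ : ℝ) (hδ0 : 0 < δ) (ξ η : ℝ) :
    |(((ξ : ℂ) + Complex.I * δ * Real.sin (Real.pi * ξ)) -
        ((η : ℂ) + Complex.I * δ * Real.sin (Real.pi * η))).im| ≤
      δ * (⨅ k : ℤ,
        |(((ξ : ℂ) + Complex.I * δ * Real.sin (Real.pi * ξ)) -
            ((η : ℂ) + Complex.I * δ * Real.sin (Real.pi * η))).re - 2 * k|) * Real.pi := by
  simp only [Complex.sub_im, Complex.sub_re, Complex.im_ofReal_add_I_mul,
    Complex.re_ofReal_add_I_mul]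
  rw [← mul_sub, abs_mul, abs_of_pos hδ0, mul_assoc]
  exact mul_le_mul_of_nonneg_left (abs_sin_pi_mul_sub_sin_pi_mul_le_iInf ξ η) hδ0.le

theorem distorted_im_le_delta_dist (δ : ℝ) (hδ0 : 0 < δ) (hδ : δ < 1 / Real.pi) (ξ η : ℝ) :
    |(((ξ : ℂ) + Complex.I * δ * Real.sin (Real.pi * ξ)) -
        ((η : ℂ) + Complex.I * δ * Real.sin (Real.pi * η))).im| ≤
      δ * (⨅ k : ℤ,
        |(((ξ : ℂ) + Complex.I * δ * Real.sin (Real.pi * ξ)) -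
            ((η : ℂ) + Complex.I * δ * Real.sin (Real.pi * η))).re - 2 * k|) * Real.pi :=
  distorted_im_le_delta_dist_general δ hδ0 ξ η
end

section
/- Let μ > 0 and c > 0. There is a constant C > 0 such that for all t ∈ (0,1], ∫₀^∞ e^{-c x t} ⟨x⟩^{-μ} dx ≤ C t^{μ/(1+μ) − 1} = C t^{-1/(1+μ)}, where ⟨x⟩ = (1 + x²)^{1/2}. -/
open Real MeasureTheory

theorem exp_decay_integral_bound (μ c : ℝ) (hμ : 0 < μ) (hc : 0 < c) :
    ∃ C : ℝ, 0 < C ∧ ∀ t : ℝ, t ∈ Set.Ioc (0 : ℝ) 1 →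
      ∫ x in Set.Ioi (0 : ℝ), Real.exp (-c * x * t) * (1 + x ^ 2) ^ (-(μ / 2)) ≤
        C * t ^ (-(1 / (1 + μ))) := by
  refine ⟨1 + 1 / c, by positivity, ?_⟩
  rintro t ⟨ht0, ht1⟩
  set f : ℝ → ℝ := fun x => Real.exp (-c * x * t) * (1 + x ^ 2) ^ (-(μ / 2)) with hf
  have hct : 0 < c * t := mul_pos hc ht0
  have hfnn : ∀ x : ℝ, 0 ≤ f x := fun x => by positivity
  have hfle : ∀ x : ℝ, f x ≤ Real.exp (-(c * t) * x) := by
    intro x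
    have h1 : (1 + x ^ 2 : ℝ) ^ (-(μ / 2)) ≤ 1 :=
      Real.rpow_le_one_of_one_le_of_nonpos (by nlinarith [sq_nonneg x]) (by linarith)
    have h2 : Real.exp (-c * x * t) = Real.exp (-(c * t) * x) := by ring_nf
    calc f x ≤ Real.exp (-c * x * t) * 1 := by
          apply mul_le_mul_of_nonneg_left h1 (Real.exp_pos _).le
      _ = Real.exp (-(c * t) * x) := by rw [mul_one, h2]
  have hcont : Continuous f := by
    apply Continuous.mul
    · exact Real.continuous_exp.comp (by continuity)
    · apply Continuous.rpow_const (by continuity)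
      intro x
      left
      nlinarith [sq_nonneg x]
  have hmeas : Measurable f := hcont.measurable
  have hint0 : IntegrableOn f (Set.Ioi 0) := by
    refine Integrable.mono' (exp_neg_integrableOn_Ioi 0 hct)
      hmeas.aestronglyMeasurable.restrict (Filter.Eventually.of_forall fun x => ?_)
    rw [norm_of_nonneg (hfnn x)]
    exact hfle x
  set a : ℝ := t ^ (-(1 / (1 + μ))) with ha
  have ha1 : 1 ≤ a := by
    have h1 : t ^ (-(1 / (1 + μ))) ≥ t ^ (0:ℝ) := by
      apply Real.rpow_le_rpow_of_exponent_ge ht0 ht1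
      have h1μ : (0:ℝ) < 1 + μ := by linarith
      have : (0:ℝ) ≤ 1 / (1 + μ) := by positivity
      linarith
    rwa [Real.rpow_zero] at h1
  · have hsplit : Set.Ioi (0:ℝ) = Set.Ioc 0 a ∪ Set.Ioi a :=
      (Set.Ioc_union_Ioi_eq_Ioi (by linarith)).symm
    have hdisj : Disjoint (Set.Ioc (0:ℝ) a) (Set.Ioi a) := Set.Ioc_disjoint_Ioi le_rfl
    have ha0 : 0 < a := by linarith
    rw [hsplit, setIntegral_union hdisj measurableSet_Ioi
      (hint0.mono_set Set.Ioc_subset_Ioi_self) (hint0.mono_set (Set.Ioi_subset_Ioi ha0.le))]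
    -- Bound on Ioc 0 a
    have hb1 : ∫ x in Set.Ioc (0:ℝ) a, f x ≤ a := by
      have : ∫ x in Set.Ioc (0:ℝ) a, f x ≤ ∫ _x in Set.Ioc (0:ℝ) a, (1:ℝ) := by
        apply setIntegral_mono_on (hint0.mono_set Set.Ioc_subset_Ioi_self)
          (integrableOn_const measure_Ioc_lt_top.ne) measurableSet_Ioc
        intro x hx
        calc f x ≤ Real.exp (-(c*t)*x) := hfle x
          _ ≤ 1 := Real.exp_le_one_iff.mpr (by nlinarith [hx.1.le])
      calc ∫ x in Set.Ioc (0:ℝ) a, f x ≤ ∫ _x in Set.Ioc (0:ℝ) a, (1:ℝ) := this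
        _ = a := by simp [Real.volume_Ioc, ENNReal.toReal_ofReal ha0.le, ha0.le]
    -- Bound on Ioi a
    have hb2 : ∫ x in Set.Ioi a, f x ≤ a ^ (-μ) * (1 / (c * t)) := by
      have hpt : ∀ x ∈ Set.Ioi a, f x ≤ a ^ (-μ) * Real.exp (-(c*t)*x) := by
        intro x hx
        have hax : a < x := hx
        have hx0 : 0 < x := lt_of_lt_of_le ha0 hax.le
        have h1 : (1 + x ^ 2 : ℝ) ^ (-(μ / 2)) ≤ a ^ (-μ) := by
          have s1 : (1 + x ^ 2 : ℝ) ^ (-(μ / 2)) ≤ (x ^ 2 : ℝ) ^ (-(μ / 2)) :=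
            Real.rpow_le_rpow_of_nonpos (by positivity) (by nlinarith) (by linarith)
          have s2 : (x ^ 2 : ℝ) ^ (-(μ / 2)) = x ^ (-μ) := by
            rw [← Real.rpow_natCast x 2, ← Real.rpow_mul hx0.le]
            norm_num
            congr 1
            ring
          have s3 : x ^ (-μ) ≤ a ^ (-μ) :=
            Real.rpow_le_rpow_of_nonpos ha0 hax.le (by linarith)
          linarith [s1, s2 ▸ s1, s3]
        calc f x = (1 + x ^ 2 : ℝ) ^ (-(μ / 2)) * Real.exp (-(c*t)*x) := by
              rw [hf]; ring_nf
          _ ≤ a ^ (-μ) * Real.exp (-(c*t)*x) :=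
              mul_le_mul_of_nonneg_right h1 (Real.exp_pos _).le
      have hint2 : IntegrableOn (fun x => a ^ (-μ) * Real.exp (-(c*t)*x)) (Set.Ioi a) :=
        (exp_neg_integrableOn_Ioi a hct).const_mul _
      have step1 : ∫ x in Set.Ioi a, f x ≤ ∫ x in Set.Ioi a, a ^ (-μ) * Real.exp (-(c*t)*x) :=
        setIntegral_mono_on (hint0.mono_set (Set.Ioi_subset_Ioi ha0.le)) hint2 measurableSet_Ioi hpt
      have step2 : ∫ x in Set.Ioi a, a ^ (-μ) * Real.exp (-(c*t)*x)
          ≤ a ^ (-μ) * ∫ x in Set.Ioi 0, Real.exp (-(c*t)*x) := by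
        rw [integral_const_mul]
        apply mul_le_mul_of_nonneg_left _ (by positivity)
        apply setIntegral_mono_set (exp_neg_integrableOn_Ioi 0 hct)
          (Filter.Eventually.of_forall fun x => (Real.exp_pos _).le)
        exact Filter.Eventually.of_forall (Set.Ioi_subset_Ioi ha0.le)
      have hval : ∫ x in Set.Ioi (0:ℝ), Real.exp (-(c*t)*x) = 1 / (c * t) := by
        have := integral_comp_mul_left_Ioi (fun x => Real.exp (-x)) 0 hct
        simp only [mul_zero, smul_eq_mul] at this
        have h2 : ∀ x : ℝ, Real.exp (-(c*t)*x) = (fun y => Real.exp (-y)) ((c*t) * x) := by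
          intro x; simp [neg_mul]
        calc ∫ x in Set.Ioi (0:ℝ), Real.exp (-(c*t)*x)
            = ∫ x in Set.Ioi (0:ℝ), (fun y => Real.exp (-y)) ((c*t) * x) := by
              apply setIntegral_congr_fun measurableSet_Ioi; intro x _; exact h2 x
          _ = (c*t)⁻¹ * ∫ x in Set.Ioi (0:ℝ), Real.exp (-x) := this
          _ = 1 / (c * t) := by rw [integral_exp_neg_Ioi_zero]; ring
      calc ∫ x in Set.Ioi a, f x ≤ _ := step1
        _ ≤ a ^ (-μ) * ∫ x in Set.Ioi 0, Real.exp (-(c*t)*x) := step2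
        _ = a ^ (-μ) * (1 / (c * t)) := by rw [hval]
    -- Combine
    have hkey : a ^ (-μ) * (1 / (c * t)) = (1 / c) * a := by
      have h1μ : (0:ℝ) < 1 + μ := by linarith
      have e1 : a ^ (-μ) = t ^ (μ / (1 + μ)) := by
        rw [ha, ← Real.rpow_mul ht0.le]
        congr 1; field_simp
      have e2 : t ^ (μ / (1 + μ)) * t⁻¹ = a := by
        rw [ha, ← Real.rpow_neg_one t, ← Real.rpow_add ht0]
        congr 1
        field_simp
        try ring
      calc a ^ (-μ) * (1 / (c * t)) = (1/c) * (t ^ (μ / (1 + μ)) * t⁻¹) := by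
            rw [e1]
            field_simp
            try ring
        _ = (1 / c) * a := by rw [e2]
    calc (∫ x in Set.Ioc (0:ℝ) a, f x) + ∫ x in Set.Ioi a, f x
        ≤ a + a ^ (-μ) * (1 / (c * t)) := add_le_add hb1 hb2
      _ = a + (1/c) * a := by rw [hkey]
      _ = (1 + 1 / c) * a := by ring
end
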